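/- arXiv:1708.04296 — 7 statements merged into one kernel-verified Lean document; each statement's English description precedes it below -/
import Mathlib

section
/- Let Ω be a 6-element set with a fixed-point-free involution e ↦ -e, and let M be a permutation of Ω satisfying (i) M(e) = e' implies M(-e') = -e, and (ii) M(e) ≠ -e for all e ∈ Ω. Then every cycle of M has length at most 3. -/
/-!
Write `σ` for the involution. Condition (i) says that conjugation by `σ` inverts `M`, so `σ`
maps the cycle of `x` onto the cycle of `σ x`. These two cycles are different: if
`M ^ j x = σ x`, then for `j = 2m` the point `M ^ m x` is fixed by `σ`, and for `j = 2m + 1`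
it is sent by `M` to its image under `σ`, contradicting (ii). Two disjoint cycles of equal
length fit into six points only if that length is at most 3.
-/

open Finset

namespace Equiv.Perm

variable {α : Type*} {σ M : Perm α}

theorem not_sameCycle_apply_of_conj_eq_inv (hM : σ * M * σ⁻¹ = M⁻¹)
    (hσ : ∀ y, σ y ≠ y) (hMσ : ∀ y, M y ≠ σ y) (x : α) : ¬ M.SameCycle x (σ x) := by
  rintro ⟨j, hj⟩
  have hσ_zpow : ∀ n : ℤ, ∀ y, σ ((M ^ n) y) = (M ^ (-n)) (σ y) := fun n y => by
    rw [zpow_neg, ← inv_zpow, ← hM, conj_zpow]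
    simp
  obtain ⟨m, rfl | rfl⟩ := Int.even_or_odd' j
  · refine hσ ((M ^ m) x) ?_
    rw [hσ_zpow, ← hj, ← mul_apply, ← zpow_add]
    congr 2; ring
  · refine hMσ ((M ^ m) x) ?_
    rw [hσ_zpow, ← hj]
    simp only [← mul_apply, ← zpow_add, ← zpow_one_add]
    congr 2; ring

variable [DecidableEq α] [Fintype α]

theorem cycleOf_conj (x : α) : (σ * M * σ⁻¹).cycleOf (σ x) = σ * M.cycleOf x * σ⁻¹ := by
  ext y
  simp only [cycleOf_apply, sameCycle_conj, mul_apply]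
  split_ifs <;> simp_all

theorem card_support_cycleOf_apply_of_conj_eq_inv (hM : σ * M * σ⁻¹ = M⁻¹) (x : α) :
    #(M.cycleOf (σ x)).support = #(M.cycleOf x).support := by
  have hconj := cycleOf_conj (σ := σ) (M := M) x
  simp only [hM, ← cycleOf_inv] at hconj
  rw [← support_inv, hconj, card_support_conj]

theorem disjoint_support_cycleOf_of_not_sameCycle {x y : α} (h : ¬ M.SameCycle x y) :
    _root_.Disjoint (M.cycleOf x).support (M.cycleOf y).support := by
  refine Finset.disjoint_left.2 fun z hx hy => ?_
  rw [mem_support_cycleOf_iff] at hx hy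
  exact h (hx.1.trans hy.1.symm)

theorem two_mul_card_support_cycleOf_le_card (hM : σ * M * σ⁻¹ = M⁻¹)
    (hσ : ∀ y, σ y ≠ y) (hMσ : ∀ y, M y ≠ σ y) (x : α) :
    2 * #(M.cycleOf x).support ≤ Fintype.card α := by
  have hdisj := disjoint_support_cycleOf_of_not_sameCycle
    (not_sameCycle_apply_of_conj_eq_inv hM hσ hMσ x)
  calc 2 * #(M.cycleOf x).support
      = #(M.cycleOf x).support + #(M.cycleOf (σ x)).support := by
        rw [card_support_cycleOf_apply_of_conj_eq_inv hM]; ring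
    _ = #((M.cycleOf x).support ∪ (M.cycleOf (σ x)).support) :=
        (card_union_of_disjoint hdisj).symm
    _ ≤ Fintype.card α := card_le_univ _

end Equiv.Perm

/-- Let `Ω` be a 6-element set with a fixed-point-free involution `neg` and let
`M` be a permutation of `Ω` satisfying `M(e) = e' → M(-e') = -e` and `M(e) ≠ -e`.
Then every cycle of `M` has length at most 3 (the cycle of `x` is `M.cycleOf x`;
its length is the cardinality of its support). -/
theorem stmt_2 {Ω : Type*} [Fintype Ω] [DecidableEq Ω]
    (hcard : Fintype.card Ω = 6)
    (neg : Ω → Ω) (hinv : Function.Involutive neg) (hfpf : ∀ e, neg e ≠ e)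
    (M : Equiv.Perm Ω)
    (h1 : ∀ e, M (neg (M e)) = neg e) (h2 : ∀ e, M e ≠ neg e) :
    ∀ x, (M.cycleOf x).support.card ≤ 3 := by
  intro x
  set σ := hinv.toPerm neg
  have hM : σ * M * σ⁻¹ = M⁻¹ := by
    ext y
    rw [Equiv.Perm.eq_inv_iff_eq]
    simpa [σ, hinv y] using h1 (neg y)
  have := Equiv.Perm.two_mul_card_support_cycleOf_le_card hM hfpf h2 x
  omega
end

section
/- Let Ω = {e₁,e₂,e₃,-e₁,-e₂,-e₃} be a 6-element set with a fixed-point-free involution, and let D = (e₁,e₂,e₃)(-e₃,-e₂,-e₁). Let M be a permutation of Ω satisfying (i) M(e) = e' implies M(-e') = -e, and (ii) M(e) ≠ -e for all e. Then M is one of exactly seven permutations: (M1) the identity; (M2) D; (M3) (-f₁,f₂,f₃)(-f₃,-f₂,f₁) where (f₁,f₂,f₃) is one of the two 3-cycles composing D; (M4) (f₁,-f₂)(f₂,-f₁) with f₃,-f₃ fixed, where (f₁,f₂,f₃) is a 3-cycle of D; (M5) D⁻¹; (M6) (-f₁,f₂,f₃)(-f₃,-f₂,f₁) where (f₁,f₂,f₃)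 is one of the two 3-cycles composing D⁻¹; (M7) (f₁,f₂)(-f₁,-f₂) with f₃,-f₃ fixed, where (f₁,f₂,f₃) is a 3-cycle of D. -/
/-- The set of oriented edges of a triangle: `(i, true)` is `eᵢ`, `(i, false)` is `-eᵢ`. -/
abbrev Ω : Type := ZMod 3 × Bool

/-- The orientation-reversing involution `e ↦ -e`. -/
def neg (x : Ω) : Ω := (x.1, !x.2)

/-- The rotation `D = (e₁,e₂,e₃)(-e₃,-e₂,-e₁)`. -/
def D : Equiv.Perm Ω where
  toFun x := if x.2 then (x.1 + 1, true) else (x.1 - 1, false)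
  invFun x := if x.2 then (x.1 - 1, true) else (x.1 + 1, false)
  left_inv := by decide
  right_inv := by decide

/-- `eᵢ` for `i = 1, 2, 3` (indices taken mod 3, so `e₃ = ed 0`). -/
def ed (i : ZMod 3) : Ω := (i, true)

/-- `(f₁,f₂,f₃)` is a 3-cycle of the permutation `σ`. -/
def IsCycleOf (σ : Equiv.Perm Ω) (f₁ f₂ f₃ : Ω) : Prop :=
  σ f₁ = f₂ ∧ σ f₂ = f₃ ∧ σ f₃ = f₁ ∧ f₁ ≠ f₂ ∧ f₂ ≠ f₃ ∧ f₁ ≠ f₃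

/-- `M = (-f₁,f₂,f₃)(-f₃,-f₂,f₁)`. -/
def M3form (M : Equiv.Perm Ω) (f₁ f₂ f₃ : Ω) : Prop :=
  M (neg f₁) = f₂ ∧ M f₂ = f₃ ∧ M f₃ = neg f₁ ∧
  M (neg f₃) = neg f₂ ∧ M (neg f₂) = f₁ ∧ M f₁ = neg f₃

/-- `M = (f₁,-f₂)(f₂,-f₁)` with `f₃, -f₃` fixed. -/
def M4form (M : Equiv.Perm Ω) (f₁ f₂ f₃ : Ω) : Prop :=
  M f₁ = neg f₂ ∧ M (neg f₂) = f₁ ∧ M f₂ = neg f₁ ∧ M (neg f₁) = f₂ ∧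
  M f₃ = f₃ ∧ M (neg f₃) = neg f₃

/-- `M = (f₁,f₂)(-f₁,-f₂)` with `f₃, -f₃` fixed. -/
def M7form (M : Equiv.Perm Ω) (f₁ f₂ f₃ : Ω) : Prop :=
  M f₁ = f₂ ∧ M f₂ = f₁ ∧ M (neg f₁) = neg f₂ ∧ M (neg f₂) = neg f₁ ∧
  M f₃ = f₃ ∧ M (neg f₃) = neg f₃

def M3type (M : Equiv.Perm Ω) : Prop := ∃ f₁ f₂ f₃, IsCycleOf D f₁ f₂ f₃ ∧ M3form M f₁ f₂ f₃
def M6type (M : Equiv.Perm Ω) : Prop := ∃ f₁ f₂ f₃, IsCycleOf D⁻¹ f₁ f₂ f₃ ∧ M3form M f₁ f₂ f₃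
def M4type (M : Equiv.Perm Ω) : Prop := ∃ f₁ f₂ f₃, IsCycleOf D f₁ f₂ f₃ ∧ M4form M f₁ f₂ f₃
def M7type (M : Equiv.Perm Ω) : Prop := ∃ f₁ f₂ f₃, IsCycleOf D f₁ f₂ f₃ ∧ M7form M f₁ f₂ f₃

/-- The two conditions satisfied by every z-monodromy:
`M(e) = e' → M(-e') = -e`, and `M(e) ≠ -e`. -/
def Cond (M : Equiv.Perm Ω) : Prop :=
  (∀ e, M (neg (M e)) = neg e) ∧ (∀ e, M e ≠ neg e)

/-- `σ` is a product of two distinct commuting 3-cycles, i.e. has cycle type (3,3). -/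
def Two3 (σ : Equiv.Perm Ω) : Prop := σ.cycleType = {3, 3}

/-- The 3-cycle `(a,b,c)` as a permutation. -/
def cyc (a b c : Ω) : Equiv.Perm Ω := Equiv.swap a b * Equiv.swap b c

/-! Both `D` and `D⁻¹` have order 3 and no fixed points, so their 3-cycles are exactly the
rotations `(f, σ f, σ² f)`. Replacing the triples in (M3), (M4), (M6), (M7) by a single edge `f`
turns the classification into a finite check over the 720 permutations of `Ω`. -/

theorem isCycleOf_iff {σ : Equiv.Perm Ω} (hσ3 : σ ^ 3 = 1) (hσ : ∀ x, σ x ≠ x) {f₁ f₂ f₃ : Ω} :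
    IsCycleOf σ f₁ f₂ f₃ ↔ f₂ = σ f₁ ∧ f₃ = σ f₂ := by
  have hσσσ (x : Ω) : σ (σ (σ x)) = x := by
    simpa [pow_succ, Equiv.Perm.mul_apply] using congr($hσ3 x)
  refine ⟨fun h ↦ ⟨h.1.symm, h.2.1.symm⟩, ?_⟩
  rintro ⟨rfl, rfl⟩
  refine ⟨rfl, rfl, hσσσ f₁, (hσ f₁).symm, (hσ (σ f₁)).symm, fun h ↦ hσ f₁ ?_⟩
  exact (congrArg σ h).trans (hσσσ f₁)

theorem exists_isCycleOf_and_iff {σ : Equiv.Perm Ω} (hσ3 : σ ^ 3 = 1) (hσ : ∀ x, σ x ≠ x)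
    (P : Ω → Ω → Ω → Prop) :
    (∃ f₁ f₂ f₃, IsCycleOf σ f₁ f₂ f₃ ∧ P f₁ f₂ f₃) ↔ ∃ f, P f (σ f) (σ (σ f)) := by
  simp only [isCycleOf_iff hσ3 hσ]
  constructor
  · rintro ⟨f₁, _, _, ⟨rfl, rfl⟩, hP⟩
    exact ⟨f₁, hP⟩
  · rintro ⟨f, hP⟩
    exact ⟨f, _, _, ⟨rfl, rfl⟩, hP⟩

theorem D_pow_three : D ^ 3 = 1 := by decide

theorem D_apply_ne : ∀ x, D x ≠ x := by decide

theorem D_inv_pow_three : D⁻¹ ^ 3 = 1 := by rw [inv_pow, D_pow_three, inv_one]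

theorem D_inv_apply_ne (x : Ω) : D⁻¹ x ≠ x :=
  fun h ↦ D_apply_ne x (Equiv.Perm.inv_eq_iff_eq.mp h).symm

set_option synthInstance.maxSize 256 in
theorem eq_one_or_eq_D_or_rotation_of_cond : ∀ M : Equiv.Perm Ω, Cond M →
    M = 1 ∨ M = D ∨ (∃ f, M3form M f (D f) (D (D f))) ∨ (∃ f, M4form M f (D f) (D (D f))) ∨
      M = D⁻¹ ∨ (∃ f, M3form M f (D⁻¹ f) (D⁻¹ (D⁻¹ f))) ∨ (∃ f, M7form M f (D f) (D (D f))) := by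
  unfold Cond M3form M4form M7form
  decide +kernel

/-- Classification of z-monodromies: every permutation `M` of `Ω` satisfying
`M(e) = e′ → M(-e′) = -e` and `M(e) ≠ -e` is of one of the seven types
(M1)–(M7). -/
theorem stmt_3 (M : Equiv.Perm Ω) (hM : Cond M) :
    M = 1 ∨ M = D ∨ M3type M ∨ M4type M ∨ M = D⁻¹ ∨ M6type M ∨ M7type M := by
  simp only [M3type, M4type, M6type, M7type, exists_isCycleOf_and_iff D_pow_three D_apply_ne,
    exists_isCycleOf_and_iff D_inv_pow_three D_inv_apply_ne]
  exact eq_one_or_eq_D_or_rotation_of_cond M hM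
end

section
/- With Ω and D = (e₁,e₂,e₃)(-e₃,-e₂,-e₁) as above, the composition D∘M is a product of two distinct commuting 3-cycles on Ω if and only if M is of one of the types (M1) identity, (M2) M = D, (M3) M = (-f₁,f₂,f₃)(-f₃,-f₂,f₁) for a 3-cycle (f₁,f₂,f₃) of D, or (M4) M = (f₁,-f₂)(f₂,-f₁) for a 3-cycle (f₁,f₂,f₃) of D; and it fails for the types (M5) M = D⁻¹, (M6), and (M7). -/
/-!
Condition `Cond` leaves only the seven types (M1)–(M7), a finite check over the 720 permutations
of `Ω`. For each type the cycles of `D ∘ M` can be read off, using that `D` maps `-f` to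
`-(D⁻¹ f)`: for (M3) it is `(f₁,-f₂,f₂)(f₃,-f₃,-f₁)` and for (M4) it is `(f₁,-f₁,f₃)(f₂,-f₃,-f₂)`,
while for (M5) it is the identity and for (M6), (M7) it fixes `f₂`.
-/

open Equiv Equiv.Perm

theorem cycleType_eq_replicate_iff {α : Type*} [Fintype α] [DecidableEq α] {σ : Perm α}
    {p k : ℕ} [hp : Fact p.Prime] (hk : k * p = Fintype.card α) :
    σ.cycleType = Multiset.replicate k p ↔ σ ^ p = 1 ∧ ∀ x, σ x ≠ x := by
  have hfree : (∀ x, σ x ≠ x) ↔ σ.cycleType.sum = Fintype.card α := by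
    simp only [sum_cycleType, Finset.card_eq_iff_eq_univ, Finset.eq_univ_iff_forall, mem_support]
  rw [hfree]
  constructor
  · intro h
    exact ⟨pow_prime_eq_one_iff.mpr fun c hc ↦ Multiset.eq_of_mem_replicate (h ▸ hc),
      by rw [h, Multiset.sum_replicate, smul_eq_mul, hk]⟩
  · rintro ⟨hσ, hsum⟩
    rw [cycleType_of_pow_prime_eq_one hσ] at hsum ⊢
    rw [Multiset.sum_replicate, smul_eq_mul, ← hk] at hsum
    rw [Nat.eq_of_mul_eq_mul_right hp.out.pos hsum]

theorem two3_iff (σ : Perm Ω) : Two3 σ ↔ σ ^ 3 = 1 ∧ ∀ x, σ x ≠ x :=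
  have : Fact (Nat.Prime 3) := ⟨Nat.prime_three⟩
  cycleType_eq_replicate_iff (k := 2) rfl

theorem not_two3_of_apply_eq {σ : Perm Ω} {x : Ω} (hx : σ x = x) : ¬Two3 σ := fun h ↦
  ((two3_iff σ).1 h).2 x hx

/-- Six points that exhaust `Ω` are distinct, so the two 3-cycles are disjoint. -/
theorem two3_of_cycles {σ : Perm Ω} {a b c a' b' c' : Ω}
    (hcover : ∀ x, x = a ∨ x = b ∨ x = c ∨ x = a' ∨ x = b' ∨ x = c')
    (ha : σ a = b) (hb : σ b = c) (hc : σ c = a)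
    (ha' : σ a' = b') (hb' : σ b' = c') (hc' : σ c' = a') : Two3 σ := by
  have hnodup : [a, b, c, a', b', c'].Nodup := by
    rw [← Multiset.coe_nodup, ← Multiset.toFinset_card_eq_card_iff_nodup]
    refine le_antisymm (Multiset.toFinset_card_le _) ?_
    have huniv : (↑[a, b, c, a', b', c'] : Multiset Ω).toFinset = Finset.univ :=
      Finset.eq_univ_of_forall fun x ↦ by
        rcases hcover x with rfl | rfl | rfl | rfl | rfl | rfl <;> simp
    rw [huniv]
    rfl
  simp only [List.nodup_cons, List.mem_cons, List.not_mem_nil] at hnodup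
  rw [two3_iff]
  refine ⟨Perm.ext fun x ↦ ?_, fun x ↦ ?_⟩ <;>
    rcases hcover x with rfl | rfl | rfl | rfl | rfl | rfl
  all_goals simp only [pow_succ, pow_zero, one_mul, Perm.mul_apply, Perm.one_apply,
    ha, hb, hc, ha', hb', hc']
  all_goals tauto

theorem D_apply_neg (x : Ω) : D (neg x) = neg (D⁻¹ x) := by
  revert x; decide

theorem cover_D_orbit (f x : Ω) :
    x = f ∨ x = D f ∨ x = D (D f) ∨ x = neg f ∨ x = neg (D f) ∨ x = neg (D (D f)) := by
  revert f x; decide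

theorem IsCycleOf.cover {f₁ f₂ f₃ : Ω} (h : IsCycleOf D f₁ f₂ f₃) (x : Ω) :
    x = f₁ ∨ x = f₂ ∨ x = f₃ ∨ x = neg f₁ ∨ x = neg f₂ ∨ x = neg f₃ := by
  obtain ⟨rfl, rfl, -⟩ := h
  exact cover_D_orbit f₁ x

theorem IsCycleOf.D_apply_neg {f₁ f₂ f₃ : Ω} (h : IsCycleOf D f₁ f₂ f₃) :
    D (neg f₁) = neg f₃ ∧ D (neg f₂) = neg f₁ ∧ D (neg f₃) = neg f₂ := by
  obtain ⟨h₁, h₂, h₃, -⟩ := h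
  simp only [_root_.D_apply_neg, inv_eq_iff_eq.mpr h₁.symm, inv_eq_iff_eq.mpr h₂.symm,
    inv_eq_iff_eq.mpr h₃.symm, and_self]

theorem M3type.two3_D_mul {M : Perm Ω} (h : M3type M) : Two3 (D * M) := by
  obtain ⟨f₁, f₂, f₃, hD, m₁, m₂, m₃, m₄, m₅, m₆⟩ := h
  obtain ⟨n₁, n₂, n₃⟩ := hD.D_apply_neg
  have hcover := hD.cover
  obtain ⟨h₁, h₂, h₃, -⟩ := hD
  refine two3_of_cycles (a := f₁) (b := neg f₂) (c := f₂) (a' := f₃) (b' := neg f₃) (c' := neg f₁)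
    (fun x ↦ ?_) ?_ ?_ ?_ ?_ ?_ ?_
  · rcases hcover x with h | h | h | h | h | h <;> simp only [h, true_or, or_true]
  all_goals simp only [Perm.mul_apply, *]

theorem M4type.two3_D_mul {M : Perm Ω} (h : M4type M) : Two3 (D * M) := by
  obtain ⟨f₁, f₂, f₃, hD, m₁, m₂, m₃, m₄, m₅, m₆⟩ := h
  obtain ⟨n₁, n₂, n₃⟩ := hD.D_apply_neg
  have hcover := hD.cover
  obtain ⟨h₁, h₂, h₃, -⟩ := hD
  refine two3_of_cycles (a := f₁) (b := neg f₁) (c := f₃) (a' := f₂) (b' := neg f₃) (c' := neg f₂)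
    (fun x ↦ ?_) ?_ ?_ ?_ ?_ ?_ ?_
  · rcases hcover x with h | h | h | h | h | h <;> simp only [h, true_or, or_true]
  all_goals simp only [Perm.mul_apply, *]

theorem M6type.not_two3_D_mul {M : Perm Ω} (h : M6type M) : ¬Two3 (D * M) := by
  obtain ⟨f₁, f₂, f₃, ⟨-, h₂, -⟩, -, m₂, -⟩ := h
  exact not_two3_of_apply_eq (x := f₂) (by rw [Perm.mul_apply, m₂, (inv_eq_iff_eq.mp h₂).symm])

theorem M7type.not_two3_D_mul {M : Perm Ω} (h : M7type M) : ¬Two3 (D * M) := by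
  obtain ⟨f₁, f₂, f₃, ⟨h₁, -⟩, -, m₂, -⟩ := h
  exact not_two3_of_apply_eq (x := f₂) (by rw [Perm.mul_apply, m₂, h₁])

theorem two3_D : Two3 D := by
  rw [two3_iff]; decide

theorem two3_D_mul_D : Two3 (D * D) := by
  rw [two3_iff]; decide

set_option synthInstance.maxSize 1000 in
theorem Cond.classify (M : Perm Ω) (hM : Cond M) :
    M = 1 ∨ M = D ∨ M = D⁻¹ ∨ M3type M ∨ M4type M ∨ M6type M ∨ M7type M := by
  revert M
  unfold Cond M3type M4type M6type M7type IsCycleOf M3form M4form M7form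
  decide +kernel

/-- `D ∘ M` is a product of two distinct commuting 3-cycles iff `M` is of type
(M1)–(M4); and it fails for types (M5)–(M7). -/
theorem stmt_4 (M : Equiv.Perm Ω) (hM : Cond M) :
    (Two3 (D * M) ↔ (M = 1 ∨ M = D ∨ M3type M ∨ M4type M)) ∧
    ((M = D⁻¹ ∨ M6type M ∨ M7type M) → ¬ Two3 (D * M)) := by
  have fails : (M = D⁻¹ ∨ M6type M ∨ M7type M) → ¬Two3 (D * M) := by
    rintro (rfl | h | h)
    · exact not_two3_of_apply_eq (x := ed 0) (by rw [mul_inv_cancel, Perm.one_apply])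
    · exact h.not_two3_D_mul
    · exact h.not_two3_D_mul
  refine ⟨⟨fun h ↦ ?_, ?_⟩, fails⟩
  · rcases Cond.classify M hM with h₁ | h₂ | h₅ | h₃ | h₄ | h₆ | h₇
    · exact .inl h₁
    · exact .inr (.inl h₂)
    · exact absurd h (fails (.inl h₅))
    · exact .inr (.inr (.inl h₃))
    · exact .inr (.inr (.inr h₄))
    · exact absurd h (fails (.inr (.inl h₆)))
    · exact absurd h (fails (.inr (.inr h₇)))
  · rintro (rfl | rfl | h | h)
    · simpa using two3_D
    · exact two3_D_mul_D
    · exact h.two3_D_mul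
    · exact h.two3_D_mul
end

section
/- Let Ω and D be as above, and suppose M is a permutation of Ω satisfying M(e)=e' ⟹ M(-e')=-e and M(e) ≠ -e. If M contains a 3-cycle, then M is a product of two distinct commuting 3-cycles, and moreover either M ∈ {D, D⁻¹} or M = (-f₁,f₂,f₃)(-f₃,-f₂,f₁) for some 3-cycle (f₁,f₂,f₃) of D or of D⁻¹. -/
/-!
The first condition says `neg * M * neg = M⁻¹`, so a 3-cycle `(a,b,c)` of `M` comes with the
3-cycle `(-c,-b,-a)`, and the second condition forces `a`, `b`, `c` to lie over three different
edges. The two cycles are then disjoint and exhaust `Ω`, so `M = (a,b,c)(-c,-b,-a)`; the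
classification is a finite check over such triples.
-/

open Equiv Equiv.Perm

theorem Equiv.Perm.apply_orbit_of_card_support_cycleOf_eq_three
    {α : Type*} [Fintype α] [DecidableEq α] {σ : Perm α} {a : α}
    (h : (σ.cycleOf a).support.card = 3) :
    σ a ≠ a ∧ σ (σ a) ≠ a ∧ σ (σ (σ a)) = a := by
  have ha : σ a ≠ a := fun ha => by simp [(cycleOf_eq_one_iff σ).mpr ha] at h
  have hc : (σ.cycleOf a).IsCycle := isCycle_cycleOf σ ha
  have hca : σ.cycleOf a a ≠ a := by rwa [cycleOf_apply_self]
  have horder : orderOf (σ.cycleOf a) = 3 := hc.orderOf.trans h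
  refine ⟨ha, fun h2 => ?_, ?_⟩
  · have hsq : σ.cycleOf a ^ 2 = 1 :=
      (hc.pow_eq_one_iff' hca).mpr (by rwa [cycleOf_pow_apply_self, sq, mul_apply])
    have h32 : 3 ∣ 2 := horder ▸ orderOf_dvd_of_pow_eq_one hsq
    norm_num at h32
  · have h3 : ((σ.cycleOf a) ^ 3) a = a := by rw [← horder, pow_orderOf_eq_one, one_apply]
    rwa [cycleOf_pow_apply_self, pow_succ, pow_succ, pow_one, mul_apply, mul_apply] at h3

theorem fst_ne_iff {x y : Ω} : x.1 ≠ y.1 ↔ x ≠ y ∧ x ≠ neg y := by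
  decide +revert

theorem Cond.fst_apply_ne {M : Perm Ω} (hM : Cond M) {e : Ω} (he : M e ≠ e) : (M e).1 ≠ e.1 :=
  fst_ne_iff.mpr ⟨he, hM.2 e⟩

def cycPair (a b c : Ω) : Perm Ω := cyc a b c * cyc (neg c) (neg b) (neg a)

theorem isThreeCycle_cyc {a b c : Ω} (hab : a ≠ b) (hbc : b ≠ c) (hac : a ≠ c) :
    (cyc a b c).IsThreeCycle := by
  have h : [a, b, c].Nodup := by simp [hab, hac, hbc]
  rw [← card_support_eq_three_iff, cyc, support_swap_mul_swap h,
    Finset.card_insert_of_notMem (by simp [hab, hac]),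
    Finset.card_insert_of_notMem (by simp [hbc]), Finset.card_singleton]

theorem isCycleOf_D (f : Ω) : IsCycleOf D f (D f) (D (D f)) := by
  unfold IsCycleOf; decide +revert

theorem isCycleOf_D_inv (f : Ω) : IsCycleOf D⁻¹ f (D⁻¹ f) (D⁻¹ (D⁻¹ f)) := by
  unfold IsCycleOf; decide +revert

section Transversal

variable {a b c : Ω} (hab : a.1 ≠ b.1) (hbc : b.1 ≠ c.1) (hac : a.1 ≠ c.1)
include hab hbc hac

set_option synthInstance.maxSize 1000 in
theorem eq_or_eq_neg_of_fst_ne (x : Ω) :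
    x = a ∨ x = b ∨ x = c ∨ x = neg a ∨ x = neg b ∨ x = neg c := by
  decide +revert

set_option synthInstance.maxSize 1000 in
theorem cycPair_apply :
    cycPair a b c a = b ∧ cycPair a b c b = c ∧ cycPair a b c c = a ∧
    cycPair a b c (neg a) = neg c ∧ cycPair a b c (neg b) = neg a ∧
    cycPair a b c (neg c) = neg b := by
  decide +revert

theorem disjoint_cyc_cyc_neg : (cyc a b c).Disjoint (cyc (neg c) (neg b) (neg a)) := by
  unfold Perm.Disjoint; decide +revert

theorem cycleType_cycPair : (cycPair a b c).cycleType = {3, 3} := by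
  have h₁ : (cyc a b c).IsThreeCycle :=
    isThreeCycle_cyc (fst_ne_iff.mp hab).1 (fst_ne_iff.mp hbc).1 (fst_ne_iff.mp hac).1
  have h₂ : (cyc (neg c) (neg b) (neg a)).IsThreeCycle :=
    isThreeCycle_cyc (fst_ne_iff (x := neg c) (y := neg b) |>.mp hbc.symm).1
      (fst_ne_iff (x := neg b) (y := neg a) |>.mp hab.symm).1
      (fst_ne_iff (x := neg c) (y := neg a) |>.mp hac.symm).1
  rw [cycPair, (disjoint_cyc_cyc_neg hab hbc hac).cycleType_mul, h₁, h₂]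
  rfl

theorem cycPair_eq_D_or_D_inv_or_M3form_orbit :
    cycPair a b c = D ∨ cycPair a b c = D⁻¹ ∨
      ∃ f, M3form (cycPair a b c) f (D f) (D (D f)) ∨
        M3form (cycPair a b c) f (D⁻¹ f) (D⁻¹ (D⁻¹ f)) := by
  unfold M3form; decide +revert

theorem cycPair_eq_D_or_D_inv_or_M3form :
    cycPair a b c = D ∨ cycPair a b c = D⁻¹ ∨
      ∃ f₁ f₂ f₃, (IsCycleOf D f₁ f₂ f₃ ∨ IsCycleOf D⁻¹ f₁ f₂ f₃) ∧
        M3form (cycPair a b c) f₁ f₂ f₃ := by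
  rcases cycPair_eq_D_or_D_inv_or_M3form_orbit hab hbc hac with h | h | ⟨f, h | h⟩
  · exact .inl h
  · exact .inr (.inl h)
  · exact .inr (.inr ⟨_, _, _, .inl (isCycleOf_D f), h⟩)
  · exact .inr (.inr ⟨_, _, _, .inr (isCycleOf_D_inv f), h⟩)

theorem Cond.eq_cycPair {M : Perm Ω} (hM : Cond M) (hMa : M a = b) (hMb : M b = c)
    (hMc : M c = a) : M = cycPair a b c := by
  obtain ⟨ha, hb, hc, hna, hnb, hnc⟩ := cycPair_apply hab hbc hac
  ext x : 1
  rcases eq_or_eq_neg_of_fst_ne hab hbc hac x with rfl | rfl | rfl | rfl | rfl | rfl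
  · rw [hMa, ha]
  · rw [hMb, hb]
  · rw [hMc, hc]
  · rw [hna, ← hM.1 c, hMc]
  · rw [hnb, ← hM.1 a, hMa]
  · rw [hnc, ← hM.1 b, hMb]

end Transversal

/-- If `M` satisfies the z-monodromy conditions and contains a 3-cycle, then
`M` is a product of two distinct commuting 3-cycles, and moreover either
`M ∈ {D, D⁻¹}` or `M = (-f₁,f₂,f₃)(-f₃,-f₂,f₁)` for some 3-cycle `(f₁,f₂,f₃)`
of `D` or of `D⁻¹`. -/
theorem stmt_11 (M : Equiv.Perm Ω) (hM : Cond M)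
    (h3 : ∃ a, (M.cycleOf a).support.card = 3) :
    Two3 M ∧
    (M = D ∨ M = D⁻¹ ∨
      ∃ f₁ f₂ f₃, (IsCycleOf D f₁ f₂ f₃ ∨ IsCycleOf D⁻¹ f₁ f₂ f₃) ∧
        M3form M f₁ f₂ f₃) := by
  obtain ⟨a, ha⟩ := h3
  obtain ⟨h₁, h₂, h₃⟩ := apply_orbit_of_card_support_cycleOf_eq_three ha
  have hab : a.1 ≠ (M a).1 := (hM.fst_apply_ne h₁).symm
  have hbc : (M a).1 ≠ (M (M a)).1 := (hM.fst_apply_ne (M.injective.ne h₁)).symm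
  have hac : a.1 ≠ (M (M a)).1 := by
    have := hM.fst_apply_ne (e := M (M a)) (by rwa [h₃, ne_comm])
    rwa [h₃] at this
  rw [hM.eq_cycPair hab hbc hac rfl rfl h₃]
  exact ⟨cycleType_cycPair hab hbc hac, cycPair_eq_D_or_D_inv_or_M3form hab hbc hac⟩
end

section
/- Let Ω and D be as above, and suppose M is a permutation of Ω satisfying M(e)=e' ⟹ M(-e')=-e and M(e) ≠ -e. If M is not the identity and has no 3-cycle, then M is a product of two transpositions fixing a pair {f₃,-f₃}, namely M = (f₁,-f₂)(f₂,-f₁) or M = (f₁,f₂)(-f₁,-f₂) for some 3-cycle (f₁,f₂,f₃) of D. -/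
/-!
Writing `N` for `neg`, the first condition says `M N M = N`. Following an orbit
`x ↦ y ↦ z ↦ u` of `M` and using that condition and `M e ≠ N e`, one finds that `u = x`
as soon as `z ≠ x`; with no 3-cycles, `M` is therefore an involution, and then
`M N = N M`. So `M` permutes the three pairs `{eᵢ, -eᵢ}` by an involution of
`ZMod 3`, moving every element of a moved pair. As `M ≠ 1`, exactly one pair `{f₃, -f₃}`
is fixed and the other two are swapped; whether `M f₁` is `f₂` or `-f₂` decides between
the two forms.
-/

theorem Equiv.Perm.card_support_cycleOf_eq_three {α : Type*} [DecidableEq α] [Fintype α]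
    {f : Equiv.Perm α} {a : α} (ha : f a ≠ a) (h3 : f (f (f a)) = a) :
    (f.cycleOf a).support.card = 3 := by
  have hc := f.isCycle_cycleOf ha
  have : Fact (Nat.Prime 3) := ⟨Nat.prime_three⟩
  rw [← hc.orderOf]
  refine orderOf_eq_prime (hc.pow_eq_one_iff.2 ⟨a, ?_, ?_⟩) ?_
  · rwa [cycleOf_apply_self]
  · rwa [cycleOf_pow_apply_self, pow_succ, pow_two, mul_apply, mul_apply]
  · intro h1
    exact ha (by simpa [cycleOf_apply_self] using congrArg (· a) h1)

theorem ZMod.three_eq_of_ne {a b c d : ZMod 3} (hab : a ≠ b) (hbc : b ≠ c) (hac : a ≠ c)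
    (hda : d ≠ a) (hdb : d ≠ b) : d = c :=
  (((by decide : ∀ a b c d : ZMod 3, a ≠ b → b ≠ c → a ≠ c → d = a ∨ d = b ∨ d = c)
    a b c d hab hbc hac).resolve_left hda).resolve_left hdb

theorem ZMod.three_exists_add_one_add_two {a b : ZMod 3} (hab : a ≠ b) :
    ∃ k, k ≠ a ∧ k ≠ b ∧ ((a = k + 1 ∧ b = k + 2) ∨ (a = k + 2 ∧ b = k + 1)) :=
  (by decide : ∀ a b : ZMod 3, a ≠ b →
    ∃ k, k ≠ a ∧ k ≠ b ∧ ((a = k + 1 ∧ b = k + 2) ∨ (a = k + 2 ∧ b = k + 1))) a b hab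

@[simp]
theorem neg_neg_apply (x : Ω) : neg (neg x) = x := by
  simp [neg]

@[simp]
theorem fst_neg (x : Ω) : (neg x).1 = x.1 := rfl

theorem neg_ne (x : Ω) : neg x ≠ x := by
  simp [neg, Prod.ext_iff]

theorem eq_or_eq_neg_of_fst_eq {x y : Ω} (h : x.1 = y.1) : y = x ∨ y = neg x := by
  obtain ⟨i, s⟩ := x
  obtain ⟨j, t⟩ := y
  cases h
  cases s <;> cases t <;> simp [neg]

theorem isCycleOf_D_ed (k : ZMod 3) : IsCycleOf D (ed (k + 1)) (ed (k + 2)) (ed k) := by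
  unfold IsCycleOf
  revert k; decide

namespace Cond

variable {M : Equiv.Perm Ω}

theorem fst_apply_ne_s12 (hM : Cond M) {x : Ω} (hx : M x ≠ x) : (M x).1 ≠ x.1 := fun h =>
  (eq_or_eq_neg_of_fst_eq h.symm).elim hx (hM.2 x)

theorem apply_apply_eq_self (hM : Cond M) (hno3 : ∀ a, M a ≠ a → M (M (M a)) ≠ a) (x : Ω) :
    M (M x) = x := by
  by_contra hzx
  set y := M x with hy
  set z := M y with hz
  have hyx : y ≠ x := fun h => hzx (by rw [hz, h, ← hy, h])
  have hzy : z ≠ y := fun h => hyx (M.injective h)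
  have hzx₁ : z.1 ≠ x.1 := by
    intro h
    refine (eq_or_eq_neg_of_fst_eq h.symm).elim hzx fun hzn => neg_ne y ?_
    rw [← hM.1 y, ← hz, hzn, neg_neg_apply]
  have hyx₁ : y.1 ≠ x.1 := hM.fst_apply_ne_s12 hyx
  have hzy₁ : z.1 ≠ y.1 := hM.fst_apply_ne_s12 hzy
  have huz₁ : (M z).1 ≠ z.1 := hM.fst_apply_ne_s12 fun h => hzy (M.injective h)
  have huy₁ : (M z).1 ≠ y.1 := by
    intro h
    rcases eq_or_eq_neg_of_fst_eq h.symm with hu | hu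
    · exact hzx (M.injective hu)
    · exact neg_ne z (M.injective (by rw [hu, hM.1 y]))
  have hux₁ : (M z).1 = x.1 := ZMod.three_eq_of_ne hzy₁ hyx₁ hzx₁ huz₁ huy₁
  rcases eq_or_eq_neg_of_fst_eq hux₁.symm with hu | hu
  · exact hno3 x hyx hu
  · exact hzy₁ (by rw [M.injective (hu.trans (hM.1 x).symm), fst_neg])

variable (hM : Cond M) (hinv : ∀ x, M (M x) = x)
include hM hinv

theorem apply_neg (x : Ω) : M (neg x) = neg (M x) := by
  simpa only [hinv] using hM.1 (M x)

theorem fst_apply_congr {x w : Ω} (h : x.1 = w.1) : (M x).1 = (M w).1 := by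
  rcases eq_or_eq_neg_of_fst_eq h with rfl | rfl
  · rfl
  · rw [apply_neg hM hinv, fst_neg]

theorem fst_eq_of_fst_apply_eq {x w : Ω} (h : (M x).1 = (M w).1) : x.1 = w.1 := by
  simpa only [hinv] using fst_apply_congr hM hinv h

theorem apply_eq_self_of_fst_ne {x z : Ω} (hx : M x ≠ x) (hzx : z.1 ≠ x.1)
    (hzy : z.1 ≠ (M x).1) : M z = z := by
  by_contra hz
  have hxy := hM.fst_apply_ne_s12 hx
  rcases eq_or_ne (M z).1 x.1 with h | h
  · exact hzy (fst_eq_of_fst_apply_eq hM hinv (by rw [h, hinv]))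
  · exact hzx (fst_eq_of_fst_apply_eq hM hinv
      (ZMod.three_eq_of_ne hzx hxy.symm hzy (hM.fst_apply_ne_s12 hz) h))

theorem M4form_or_M7form_ed {k : ZMod 3} (h : (M (ed (k + 1))).1 = k + 2)
    (hfix : M (ed k) = ed k) :
    M4form M (ed (k + 1)) (ed (k + 2)) (ed k) ∨ M7form M (ed (k + 1)) (ed (k + 2)) (ed k) := by
  have hneg : M (neg (ed k)) = neg (ed k) := by rw [apply_neg hM hinv, hfix]
  rcases eq_or_eq_neg_of_fst_eq (x := ed (k + 2)) h.symm with h₁ | h₁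
  · right
    refine ⟨h₁, ?_, ?_, ?_, hfix, hneg⟩
    · rw [← h₁, hinv]
    · rw [apply_neg hM hinv, h₁]
    · rw [apply_neg hM hinv, ← h₁, hinv]
  · left
    refine ⟨h₁, ?_, ?_, ?_, hfix, hneg⟩
    · rw [← h₁, hinv]
    · rw [← neg_neg_apply (ed (k + 2)), ← h₁, hM.1]
    · rw [apply_neg hM hinv, h₁, neg_neg_apply]

end Cond

/-- If `M` satisfies the z-monodromy conditions, is not the identity and has no
3-cycle, then `M = (f₁,-f₂)(f₂,-f₁)` or `M = (f₁,f₂)(-f₁,-f₂)` for some 3-cycle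
`(f₁,f₂,f₃)` of `D`, fixing the pair `{f₃,-f₃}`. -/
theorem stmt_12 (M : Equiv.Perm Ω) (hM : Cond M) (hne : M ≠ 1)
    (hno3 : ∀ a, (M.cycleOf a).support.card ≠ 3) :
    ∃ f₁ f₂ f₃, IsCycleOf D f₁ f₂ f₃ ∧
      (M4form M f₁ f₂ f₃ ∨ M7form M f₁ f₂ f₃) := by
  have hinv := hM.apply_apply_eq_self fun a ha h3 =>
    hno3 a (Equiv.Perm.card_support_cycleOf_eq_three ha h3)
  obtain ⟨x, hx⟩ : ∃ x, M x ≠ x := not_forall.1 fun h => hne (Equiv.ext h)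
  have hxy := hM.fst_apply_ne_s12 hx
  obtain ⟨k, hkx, hky, hk⟩ := ZMod.three_exists_add_one_add_two hxy.symm
  refine ⟨_, _, _, isCycleOf_D_ed k, hM.M4form_or_M7form_ed hinv ?_ ?_⟩
  · rcases hk with ⟨hx₁, hy₁⟩ | ⟨hx₁, hy₁⟩
    · rw [← hy₁]; exact hM.fst_apply_congr hinv hx₁.symm
    · rw [← hx₁, ← hinv x]; exact hM.fst_apply_congr hinv hy₁.symm
  · exact hM.apply_eq_self_of_fst_ne hinv hx hkx hky
end

section
/- Let Ω and D be as above, and let M and M' both be permutations of type (M3): M = (-f₁,f₂,f₃)(-f₃,-f₂,f₁) and M' = (-f'₁,f'₂,f'₃)(-f'₃,-f'₂,f'₁) for 3-cycles (f₁,f₂,f₃) of D and (f'₁,f'₂,f'₃) of D'. Then for the bijection g : Ω → Ω' with g(fᵢ) = f'ᵢ (extended by g(-e) = -g(e)), the composition g∘M∘g⁻¹∘M' = (M')² is a product of two distinct commuting 3-cycles. -/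
/-!
Conjugating by `g`, which commutes with negation, turns the (M3) relations of `M` on
`f₁, f₂, f₃, -f₁, -f₂, -f₃` into the (M3) relations on `f'₁, f'₂, f'₃, -f'₁, -f'₂, -f'₃`.
These six edges exhaust `Ω`, so the relations determine the permutation and `g M g⁻¹ = M'`.
Moreover `M'` has order 3 and no fixed point, so on six points it has cycle type (3,3),
and so does `M' * M' = M'⁻¹`.
-/

open Equiv Finset

theorem Equiv.Perm.cycleType_eq_replicate_of_pow_prime_eq_one {α : Type*} [Fintype α]
    [DecidableEq α] {σ : Perm α} {p : ℕ} [Fact p.Prime] (hσ : σ ^ p = 1) (hfix : ∀ x, σ x ≠ x) :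
    σ.cycleType = Multiset.replicate (Fintype.card α / p) p := by
  have hrep := Perm.cycleType_of_pow_prime_eq_one hσ
  have hsum : σ.cycleType.card * p = Fintype.card α := by
    have hsupp : σ.support = univ := eq_univ_iff_forall.2 fun x => Perm.mem_support.2 (hfix x)
    rw [← card_univ, ← hsupp, ← Perm.sum_cycleType, hrep, Multiset.sum_replicate, smul_eq_mul,
      Multiset.card_replicate]
  rwa [← hsum, Nat.mul_div_cancel _ (Fact.out : p.Prime).pos]

def frame (f₁ f₂ f₃ : Ω) : List Ω := [f₁, f₂, f₃, neg f₁, neg f₂, neg f₃]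

theorem IsCycleOf.frame_nodup {f₁ f₂ f₃ : Ω} (hc : IsCycleOf D f₁ f₂ f₃) :
    (frame f₁ f₂ f₃).Nodup := by
  revert hc; revert f₁ f₂ f₃; unfold IsCycleOf frame; decide

theorem frame_map {g : Perm Ω} (hg : ∀ x, g (neg x) = neg (g x)) (f₁ f₂ f₃ : Ω) :
    (frame f₁ f₂ f₃).map g = frame (g f₁) (g f₂) (g f₃) := by
  simp [frame, hg]

theorem mem_frame_of_nodup {f₁ f₂ f₃ : Ω} (h : (frame f₁ f₂ f₃).Nodup) (x : Ω) :
    x = f₁ ∨ x = f₂ ∨ x = f₃ ∨ x = neg f₁ ∨ x = neg f₂ ∨ x = neg f₃ := by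
  have huniv : (frame f₁ f₂ f₃).toFinset = univ :=
    eq_univ_of_card _ (by rw [List.toFinset_card_of_nodup h]; rfl)
  have hx : x ∈ frame f₁ f₂ f₃ := List.mem_toFinset.1 (huniv ▸ mem_univ x)
  simpa [frame] using hx

namespace M3form

variable {M N : Perm Ω} {f₁ f₂ f₃ : Ω}

theorem conj {g : Perm Ω} (hg : ∀ x, g (neg x) = neg (g x)) (hM : M3form M f₁ f₂ f₃) :
    M3form (g * M * g⁻¹) (g f₁) (g f₂) (g f₃) := by
  obtain ⟨h₁, h₂, h₃, h₄, h₅, h₆⟩ := hM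
  simp only [M3form, Perm.mul_apply, ← hg, Perm.coe_inv, symm_apply_apply,
    h₁, h₂, h₃, h₄, h₅, h₆, and_self]

theorem unique (hf : (frame f₁ f₂ f₃).Nodup) (hM : M3form M f₁ f₂ f₃) (hN : M3form N f₁ f₂ f₃) :
    M = N := by
  obtain ⟨h₁, h₂, h₃, h₄, h₅, h₆⟩ := hM
  obtain ⟨k₁, k₂, k₃, k₄, k₅, k₆⟩ := hN
  ext1 x
  rcases mem_frame_of_nodup hf x with rfl | rfl | rfl | rfl | rfl | rfl <;> simp only [*]

theorem pow_three_eq_one (hf : (frame f₁ f₂ f₃).Nodup) (hM : M3form M f₁ f₂ f₃) : M ^ 3 = 1 := by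
  obtain ⟨h₁, h₂, h₃, h₄, h₅, h₆⟩ := hM
  ext1 x
  rcases mem_frame_of_nodup hf x with rfl | rfl | rfl | rfl | rfl | rfl <;>
    simp only [pow_succ, pow_zero, one_mul, Perm.mul_apply, Perm.one_apply, *]

theorem apply_ne_self (hf : (frame f₁ f₂ f₃).Nodup) (hM : M3form M f₁ f₂ f₃) (x : Ω) :
    M x ≠ x := by
  obtain ⟨h₁, h₂, h₃, h₄, h₅, h₆⟩ := hM
  have hx := mem_frame_of_nodup hf x
  simp only [frame, List.nodup_cons, List.mem_cons, List.not_mem_nil, or_false] at hf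
  rcases hx with rfl | rfl | rfl | rfl | rfl | rfl <;> simp only [*] <;> tauto

theorem two3_mul_self (hf : (frame f₁ f₂ f₃).Nodup) (hM : M3form M f₁ f₂ f₃) :
    Two3 (M * M) := by
  have hcube := hM.pow_three_eq_one hf
  have hsq : M * M = M⁻¹ := eq_inv_of_mul_eq_one_left (by rw [← pow_three', hcube])
  rw [Two3, hsq, Perm.cycleType_inv,
    Perm.cycleType_eq_replicate_of_pow_prime_eq_one hcube (hM.apply_ne_self hf)]
  rfl

end M3form

theorem stmt_13_general (f₁ f₂ f₃ f₁' f₂' f₃' : Ω)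
    (M M' g : Equiv.Perm Ω)
    (hc : IsCycleOf D f₁ f₂ f₃)
    (hM : M3form M f₁ f₂ f₃) (hM' : M3form M' f₁' f₂' f₃')
    (hg : ∀ x, g (neg x) = neg (g x))
    (h1 : g f₁ = f₁') (h2 : g f₂ = f₂') (h3 : g f₃ = f₃') :
    g * M * g⁻¹ * M' = M' * M' ∧ Two3 (M' * M') := by
  subst h1 h2 h3
  have hf : (frame (g f₁) (g f₂) (g f₃)).Nodup :=
    frame_map hg f₁ f₂ f₃ ▸ hc.frame_nodup.map g.injective
  rw [(hM.conj hg).unique hf hM']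
  exact ⟨rfl, hM'.two3_mul_self hf⟩

/-- If `M` and `M′` are both of type (M3), with respect to 3-cycles
`(f₁,f₂,f₃)` of `D` and `(f′₁,f′₂,f′₃)` of the rotation `D′` of the second
triangle, and `g` is the bijection commuting with negation with `g(fᵢ) = f′ᵢ`,
then `g ∘ M ∘ g⁻¹ ∘ M′ = (M′)²` is a product of two distinct commuting
3-cycles. -/
theorem stmt_13 (D' : Equiv.Perm Ω) (f₁ f₂ f₃ f₁' f₂' f₃' : Ω)
    (M M' g : Equiv.Perm Ω)
    (hc : IsCycleOf D f₁ f₂ f₃) (hc' : IsCycleOf D' f₁' f₂' f₃')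
    (hM : M3form M f₁ f₂ f₃) (hM' : M3form M' f₁' f₂' f₃')
    (hg : ∀ x, g (neg x) = neg (g x))
    (h1 : g f₁ = f₁') (h2 : g f₂ = f₂') (h3 : g f₃ = f₃') :
    g * M * g⁻¹ * M' = M' * M' ∧ Two3 (M' * M') :=
  stmt_13_general f₁ f₂ f₃ f₁' f₂' f₃' M M' g hc hM hM' hg h1 h2 h3
end

section
/- Let Ω and D be as above and M = (f₁,f₂)(-f₁,-f₂) of type (M7), where (f₁,f₂,f₃) is a 3-cycle of D. Then D∘M has a cycle of length 1 or 2, hence is not a product of two distinct commuting 3-cycles. -/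
theorem Equiv.Perm.sum_cycleType_lt_card {α : Type*} [Fintype α] [DecidableEq α]
    {σ : Equiv.Perm α} {x : α} (hx : σ x = x) : σ.cycleType.sum < Fintype.card α := by
  rw [Equiv.Perm.sum_cycleType]
  exact Finset.card_lt_univ_of_notMem (x := x) (by simpa [Equiv.Perm.mem_support] using hx)

-- Cycle type (3,3) moves all 3 + 3 = |Ω| points.
theorem not_two3_of_apply_eq_self {σ : Equiv.Perm Ω} {x : Ω} (hx : σ x = x) : ¬ Two3 σ := by
  intro h
  have hlt := Equiv.Perm.sum_cycleType_lt_card hx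
  rw [h] at hlt
  exact absurd hlt (by decide)

theorem D_mul_apply_snd_of_M7form {M : Equiv.Perm Ω} {f₁ f₂ f₃ : Ω}
    (hc : IsCycleOf D f₁ f₂ f₃) (hM : M7form M f₁ f₂ f₃) : (D * M) f₂ = f₂ := by
  rw [Equiv.Perm.mul_apply, hM.2.1, hc.1]

/-- If `M = (f₁,f₂)(-f₁,-f₂)` is of type (M7) for a 3-cycle `(f₁,f₂,f₃)` of
`D`, then `D ∘ M` has a cycle of length 1 or 2, hence is not a product of two
distinct commuting 3-cycles. -/
theorem stmt_17 (M : Equiv.Perm Ω) (f₁ f₂ f₃ : Ω)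
    (hc : IsCycleOf D f₁ f₂ f₃) (hM : M7form M f₁ f₂ f₃) :
    (∃ x, (D * M) x = x ∨ ((D * M).cycleOf x).support.card = 2) ∧
    ¬ Two3 (D * M) := by
  have hfix := D_mul_apply_snd_of_M7form hc hM
  exact ⟨⟨f₂, Or.inl hfix⟩, not_two3_of_apply_eq_self hfix⟩
end
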